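/- Let G be a finite bipartite graph with bipartition (L, R) in which every vertex has degree at least 1 and the maximum matching size satisfies ρ(L) = |R| < |L|. Define S_0 = ∅ and, iteratively for i ≥ 1, let B_i be a maximal set X ⊆ L \ S_{i−1} minimizing (|Γ(X ∪ S_{i−1})| − |Γ(S_{i−1})|)/|X|, and set S_i = S_{i−1} ∪ B_i, stopping at the first k with S_k = L. Then for every maxmin-fair distribution F of matchings of G, every i ∈ {1,…,k} and every u ∈ B_i, the coverage probability F[u] equals λ_i = |Γ(B_i) \ Γ(S_{i−1})| / |B_i|; moreover, every vertex w ∈ Γ(B_i) \ Γ(S_{i−1}) is matched to some vertex of B_i with probability 1 under F. -/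

import Mathlib

/-!
A finite bipartite graph with bipartition `(L, R)` is modelled by its edge set
`E : Finset (L × R)`, where `L` and `R` are finite types.  A matching is a subset of `E`
in which no two distinct edges share an endpoint.  `nbhd E S` is the set `Γ(S)` of
neighbours in `R` of a set `S ⊆ L` of left vertices.  A distribution of matchings is a
nonnegative function on `Finset (L × R)`, supported on matchings, summing to `1`;
`covP p u` is the probability that the left vertex `u` is covered by the random matching.
-/

variable {L R : Type*}

/-- `M` is a matching of the bipartite graph with edge set `E`. -/
def IsMatching [DecidableEq L] [DecidableEq R]
    (E M : Finset (L × R)) : Prop :=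
  M ⊆ E ∧ ∀ e ∈ M, ∀ f ∈ M, e ≠ f → e.1 ≠ f.1 ∧ e.2 ≠ f.2

/-- The neighbourhood `Γ(S) ⊆ R` of a set `S ⊆ L` of left vertices. -/
def nbhd [DecidableEq L] [DecidableEq R] (E : Finset (L × R)) (S : Finset L) : Finset R :=
  (E.filter (fun e => e.1 ∈ S)).image Prod.snd

/-- `p` is a probability distribution over the matchings of the graph with edge set `E`. -/
def IsDistribM [Fintype L] [Fintype R] [DecidableEq L] [DecidableEq R]
    (E : Finset (L × R)) (p : Finset (L × R) → ℝ) : Prop :=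
  (∀ M, 0 ≤ p M) ∧ (∀ M, p M ≠ 0 → IsMatching E M) ∧ (∑ M : Finset (L × R), p M) = 1

/-- The coverage (satisfaction) probability of the left vertex `u` under the
distribution of matchings `p`. -/
def covP [Fintype L] [Fintype R] [DecidableEq L] [DecidableEq R]
    (p : Finset (L × R) → ℝ) (u : L) : ℝ :=
  ∑ M : Finset (L × R), if u ∈ M.image Prod.fst then p M else 0

/-- `F` is a maxmin-fair distribution of matchings for the one-sided bipartite matching
problem (the users are the left vertices `L`). -/
def MaxminFairM [Fintype L] [Fintype R] [DecidableEq L] [DecidableEq R]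
    (E : Finset (L × R)) (F : Finset (L × R) → ℝ) : Prop :=
  IsDistribM E F ∧
    ∀ D, IsDistribM E D → ∀ u : L, covP F u < covP D u →
      ∃ v : L, covP D v < covP F v ∧ covP F v ≤ covP F u

open scoped Classical

/-- The maximum matching size `ρ(L)` of the bipartite graph with edge set `E`. -/
noncomputable def matchNum [Fintype L] [Fintype R] [DecidableEq L] [DecidableEq R]
    (E : Finset (L × R)) : ℕ :=
  ((Finset.univ : Finset (Finset (L × R))).filter (IsMatching E)).sup Finset.card

/-- `X` is a nonempty subset of `L \ S₀` minimizing the ratio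
`(|Γ(X ∪ S₀)| − |Γ(S₀)|) / |X|`. -/
def MinRatioSet [Fintype L] [Fintype R] [DecidableEq L] [DecidableEq R]
    (E : Finset (L × R)) (S₀ X : Finset L) : Prop :=
  X.Nonempty ∧ X ⊆ Finset.univ \ S₀ ∧
    ∀ Y : Finset L, Y.Nonempty → Y ⊆ Finset.univ \ S₀ →
      (((nbhd E (X ∪ S₀)).card : ℝ) - ((nbhd E S₀).card : ℝ)) / (X.card : ℝ) ≤
        (((nbhd E (Y ∪ S₀)).card : ℝ) - ((nbhd E S₀).card : ℝ)) / (Y.card : ℝ)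

/-!
Write `N_i = Γ(B_i) \ Γ(S_{i-1})` and `λ_i = |N_i| / |B_i|`. Minimality of the ratio of `B_i`
over `S_{i-1}` is Hall's condition for a fractional matching of `B_i` into `N_i` giving every
`u ∈ B_i` the mass `λ_i` and every `w ∈ N_i` the mass `1`. Testing the minimality against
`L \ S_{i-1}` and against `B_i ∪ B_{i+1}` shows `λ_i ≤ 1` and `λ_i ≤ λ_{i+1}`. The blocks partition
`L` and the `N_i` partition `R`, so the block matchings add up to a fractional matching which,
padded by `|L| - |R|` dummy right vertices, is doubly stochastic; Birkhoff–von Neumann turns it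
into a distribution `D` of matchings covering each `u ∈ B_i` with probability `λ_i`.

By induction on `i`, a maxmin-fair `F` agrees with `D` on `S_i`: fairness against `D` gives
`F ≥ D` on `B_i` (a vertex sacrificed for it lies in a later block, where `D` is at least `λ_i`),
while `∑_{S_i} F ≤ |Γ(S_i)| = ∑_{S_i} D`. Equality in that bound forces almost every matching
drawn from `F` to match all of `Γ(S_i)` into `S_i`, and a vertex of `N_i` can only be matched
into `B_i`.
-/

open Finset

section Neighbourhood

variable [DecidableEq L] [DecidableEq R] {E : Finset (L × R)}

lemma mem_nbhd {S : Finset L} {w : R} : w ∈ nbhd E S ↔ ∃ u ∈ S, (u, w) ∈ E := by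
  simp only [nbhd, mem_image, mem_filter, Prod.exists]
  exact ⟨fun ⟨u, _, ⟨he, hu⟩, h⟩ => h ▸ ⟨u, hu, he⟩, fun ⟨u, hu, he⟩ => ⟨u, w, ⟨he, hu⟩, rfl⟩⟩

lemma nbhd_mono {S T : Finset L} (h : S ⊆ T) : nbhd E S ⊆ nbhd E T := fun _ hw =>
  let ⟨u, hu, he⟩ := mem_nbhd.1 hw
  mem_nbhd.2 ⟨u, h hu, he⟩

lemma nbhd_union (S T : Finset L) : nbhd E (S ∪ T) = nbhd E S ∪ nbhd E T := by
  ext w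
  simp only [mem_nbhd, mem_union, or_and_right, exists_or]

lemma nbhd_empty : nbhd E (∅ : Finset L) = ∅ := by
  ext w
  simp [mem_nbhd]

lemma nbhd_univ [Fintype L] [Fintype R] (hR : ∀ w : R, ∃ u : L, (u, w) ∈ E) :
    nbhd E (univ : Finset L) = univ :=
  eq_univ_of_forall fun w => mem_nbhd.2 <| (hR w).imp fun _ he => ⟨mem_univ _, he⟩

lemma card_nbhd_union_sub (X S : Finset L) :
    (#(nbhd E (X ∪ S)) : ℝ) - #(nbhd E S) = #(nbhd E X \ nbhd E S) := by
  rw [nbhd_union, ← card_sdiff_add_card, Nat.cast_add, add_sub_cancel_right]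

end Neighbourhood

namespace IsMatching

variable [DecidableEq L] [DecidableEq R] {E M : Finset (L × R)}

lemma injOn_fst (hM : IsMatching E M) : Set.InjOn Prod.fst (M : Set (L × R)) :=
  fun e he f hf h => by_contra fun hne => (hM.2 e he f hf hne).1 h

lemma injOn_snd (hM : IsMatching E M) : Set.InjOn Prod.snd (M : Set (L × R)) :=
  fun e he f hf h => by_contra fun hne => (hM.2 e he f hf hne).2 h

lemma image_snd_filter_subset_nbhd (hM : IsMatching E M) (T : Finset L) :
    {e ∈ M | e.1 ∈ T}.image Prod.snd ⊆ nbhd E T := by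
  intro w hw
  obtain ⟨e, he, rfl⟩ := mem_image.1 hw
  exact mem_nbhd.2 ⟨e.1, (mem_filter.1 he).2, hM.1 (mem_filter.1 he).1⟩

lemma card_image_snd_filter (hM : IsMatching E M) (T : Finset L) :
    #({e ∈ M | e.1 ∈ T}.image Prod.snd) = #{e ∈ M | e.1 ∈ T} :=
  card_image_of_injOn (hM.injOn_snd.mono (filter_subset _ _))

lemma card_filter_le_card_nbhd (hM : IsMatching E M) (T : Finset L) :
    #{e ∈ M | e.1 ∈ T} ≤ #(nbhd E T) :=
  hM.card_image_snd_filter T ▸ card_le_card (hM.image_snd_filter_subset_nbhd T)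

lemma card_filter_mem_image_fst (hM : IsMatching E M) (T : Finset L) :
    #{u ∈ T | u ∈ M.image Prod.fst} = #{e ∈ M | e.1 ∈ T} := by
  rw [← card_image_of_injOn (hM.injOn_fst.mono (filter_subset _ _))]
  congr 1
  ext u
  simp only [mem_filter, mem_image]
  exact ⟨fun ⟨hu, e, he, h⟩ => ⟨e, ⟨he, h ▸ hu⟩, h⟩, fun ⟨e, ⟨he, h⟩, h'⟩ => ⟨h' ▸ h, e, he, h'⟩⟩

lemma card_compl_nbhd_le [Fintype L] [Fintype R] (hM : IsMatching E M)
    (hR : ∀ w : R, ∃ u : L, (u, w) ∈ M) (S : Finset L) :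
    #(univ \ nbhd E S) ≤ #(univ \ S) := by
  choose f hf using hR
  refine card_le_card_of_injOn f (fun w hw => ?_) fun w _ w' _ h => ?_
  · simp only [coe_sdiff, coe_univ, Set.mem_sdiff, Set.mem_univ, true_and, mem_coe] at hw ⊢
    exact fun hS => hw (mem_nbhd.2 ⟨f w, hS, hM.1 (hf w)⟩)
  · exact congrArg Prod.snd (hM.injOn_fst (hf w) (h ▸ hf w') (by simp [h]))

end IsMatching

lemma exists_isMatching_forall_mem [Fintype L] [Fintype R] [DecidableEq L] [DecidableEq R]
    {E : Finset (L × R)} (hρ : matchNum E = Fintype.card R) :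
    ∃ M, IsMatching E M ∧ ∀ w : R, ∃ u : L, (u, w) ∈ M := by
  have hne : ({M | IsMatching E M} : Finset (Finset (L × R))).Nonempty :=
    ⟨∅, mem_filter.2 ⟨mem_univ _, empty_subset _, by simp⟩⟩
  obtain ⟨M, hM, hcard⟩ := exists_mem_eq_sup _ hne card
  replace hM := (mem_filter.1 hM).2
  have himage : M.image Prod.snd = univ := by
    refine eq_univ_of_card _ ?_
    rw [card_image_of_injOn hM.injOn_snd, ← hcard]
    exact hρ
  refine ⟨M, hM, fun w => ?_⟩
  obtain ⟨e, he, rfl⟩ := mem_image.1 (himage ▸ mem_univ w)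
  exact ⟨e.1, he⟩

namespace IsDistribM

variable [Fintype L] [Fintype R] [DecidableEq L] [DecidableEq R]
  {E : Finset (L × R)} {p : Finset (L × R) → ℝ}

lemma sum_covP_eq (hp : IsDistribM E p) (T : Finset L) :
    ∑ u ∈ T, covP p u = ∑ M, p M * #{e ∈ M | e.1 ∈ T} := by
  simp only [covP]
  rw [sum_comm]
  refine sum_congr rfl fun M _ => ?_
  rw [sum_ite, sum_const, sum_const_zero, add_zero, nsmul_eq_mul, mul_comm]
  rcases eq_or_ne (p M) 0 with h | h
  · simp [h]
  · rw [(hp.2.1 M h).card_filter_mem_image_fst]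

lemma mul_card_filter_le (hp : IsDistribM E p) (M : Finset (L × R)) (T : Finset L) :
    p M * #{e ∈ M | e.1 ∈ T} ≤ p M * #(nbhd E T) := by
  rcases eq_or_ne (p M) 0 with h | h
  · simp [h]
  · exact mul_le_mul_of_nonneg_left
      (Nat.cast_le.2 ((hp.2.1 M h).card_filter_le_card_nbhd T)) (hp.1 M)

lemma sum_covP_le (hp : IsDistribM E p) (T : Finset L) :
    ∑ u ∈ T, covP p u ≤ #(nbhd E T) := by
  rw [hp.sum_covP_eq]
  calc ∑ M, p M * #{e ∈ M | e.1 ∈ T} ≤ ∑ M, p M * #(nbhd E T) :=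
        sum_le_sum fun M _ => hp.mul_card_filter_le M T
    _ = #(nbhd E T) := by rw [← sum_mul, hp.2.2, one_mul]

lemma exists_mem_of_sum_covP_eq (hp : IsDistribM E p) {T : Finset L}
    (hT : ∑ u ∈ T, covP p u = #(nbhd E T)) {M : Finset (L × R)} (hM : p M ≠ 0)
    {w : R} (hw : w ∈ nbhd E T) : ∃ e ∈ M, e.2 = w ∧ e.1 ∈ T := by
  have hgap : ∀ N ∈ (univ : Finset (Finset (L × R))),
      0 ≤ p N * ((#(nbhd E T) : ℝ) - #{e ∈ N | e.1 ∈ T}) := fun N _ => by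
    rw [mul_sub]
    exact sub_nonneg.2 (hp.mul_card_filter_le N T)
  have htotal : ∑ N, p N * ((#(nbhd E T) : ℝ) - #{e ∈ N | e.1 ∈ T}) = 0 := by
    simp only [mul_sub, sum_sub_distrib, ← sum_mul, hp.2.2, ← hp.sum_covP_eq, hT]
    ring
  have hcard : (#{e ∈ M | e.1 ∈ T} : ℝ) = #(nbhd E T) := by
    have := (sum_eq_zero_iff_of_nonneg hgap).1 htotal M (mem_univ M)
    rcases mul_eq_zero.1 this with h | h
    · exact absurd h hM
    · linarith
  have hMm := hp.2.1 M hM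
  have himage := eq_of_subset_of_card_le (hMm.image_snd_filter_subset_nbhd T)
    (by rw [hMm.card_image_snd_filter]; exact_mod_cast hcard.ge)
  obtain ⟨e, he, rfl⟩ := mem_image.1 (himage ▸ hw)
  exact ⟨e, (mem_filter.1 he).1, rfl, (mem_filter.1 he).2⟩

lemma sum_ite_eq_one (hp : IsDistribM E p) {P : Finset (L × R) → Prop} [DecidablePred P]
    (hP : ∀ M, p M ≠ 0 → P M) : ∑ M, (if P M then p M else 0) = 1 := by
  rw [← hp.2.2]
  refine sum_congr rfl fun M _ => ?_
  by_cases h : p M = 0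
  · simp [h]
  · rw [if_pos (hP M h)]

end IsDistribM

lemma exists_isDistribM_of_weights [Fintype L] [Fintype R] [DecidableEq L] [DecidableEq R]
    {E : Finset (L × R)} {ι : Type*} [Fintype ι] (c : ι → ℝ) (hc0 : ∀ i, 0 ≤ c i)
    (hc1 : ∑ i, c i = 1) (m : ι → Finset (L × R)) (hm : ∀ i, c i ≠ 0 → IsMatching E (m i)) :
    ∃ D, IsDistribM E D ∧ ∀ u, covP D u = ∑ i, if u ∈ (m i).image Prod.fst then c i else 0 := by
  refine ⟨fun M => ∑ i, if m i = M then c i else 0, ⟨fun M => ?_, fun M hM => ?_, ?_⟩, fun u => ?_⟩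
  · exact sum_nonneg fun i _ => by split_ifs <;> simp [hc0]
  · obtain ⟨i, -, hi⟩ := exists_ne_zero_of_sum_ne_zero hM
    split_ifs at hi with h
    · exact h ▸ hm i hi
    · exact absurd rfl hi
  · rw [sum_comm]
    simp [hc1]
  · simp only [covP, ite_sum_zero]
    rw [sum_comm]
    refine sum_congr rfl fun i _ => ?_
    rw [sum_eq_single (m i) (fun M _ hM => by simp [Ne.symm hM]) (by simp)]
    simp

lemma Matrix.apply_eq_sum_of_eq_sum_permMatrix {n : Type*} [Fintype n] [DecidableEq n]
    {A : Matrix n n ℝ} {c : Equiv.Perm n → ℝ} (hA : ∑ σ, c σ • σ.permMatrix ℝ = A) (u v : n) :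
    A u v = ∑ σ, if σ u = v then c σ else 0 := by
  simp [← hA, Matrix.sum_apply, Equiv.Perm.permMatrix, PEquiv.toMatrix_apply]

lemma Matrix.le_apply_of_eq_sum_permMatrix {n : Type*} [Fintype n] [DecidableEq n]
    {A : Matrix n n ℝ} {c : Equiv.Perm n → ℝ} (hc0 : ∀ σ, 0 ≤ c σ)
    (hA : ∑ σ, c σ • σ.permMatrix ℝ = A) (σ : Equiv.Perm n) (u : n) : c σ ≤ A u (σ u) := by
  rw [Matrix.apply_eq_sum_of_eq_sum_permMatrix hA]
  calc c σ = if σ u = σ u then c σ else 0 := (if_pos rfl).symm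
    _ ≤ _ := single_le_sum (f := fun τ => if τ u = σ u then c τ else 0)
      (fun τ _ => by split_ifs <;> simp [hc0]) (mem_univ σ)

section Birkhoff

variable [Fintype R] {m : ℕ}

/-- `x` extended by `m` dummy columns that share the slack `1 - ∑ w, x u w` of each row. -/
noncomputable def padMatrix (x : L → R → ℝ) (e : R ⊕ Fin m ≃ L) : Matrix L L ℝ :=
  fun u v => Sum.elim (x u) (fun _ => (1 - ∑ w, x u w) / m) (e.symm v)

lemma padMatrix_apply_inl (x : L → R → ℝ) (e : R ⊕ Fin m ≃ L) (u : L) (w : R) :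
    padMatrix x e u (e (.inl w)) = x u w := by
  simp [padMatrix]

lemma padMatrix_mem_doublyStochastic [Fintype L] [DecidableEq L] (hm : 0 < m)
    (e : R ⊕ Fin m ≃ L) {x : L → R → ℝ} (h0 : ∀ u w, 0 ≤ x u w)
    (hrow : ∀ u, ∑ w, x u w ≤ 1) (hcol : ∀ w, ∑ u, x u w = 1) :
    padMatrix x e ∈ doublyStochastic ℝ L := by
  have hm' : (m : ℝ) ≠ 0 := by positivity
  rw [mem_doublyStochastic_iff_sum]
  refine ⟨fun u v => ?_, fun u => ?_, fun v => ?_⟩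
  · simp only [padMatrix]
    cases e.symm v with
    | inl w => exact h0 u w
    | inr t => exact div_nonneg (sub_nonneg.2 (hrow u)) m.cast_nonneg
  · rw [← e.sum_comp, Fintype.sum_sum_type]
    simp [padMatrix]
    field_simp
    ring
  · simp only [padMatrix]
    cases e.symm v with
    | inl w => exact hcol w
    | inr t =>
      have hcard : (Fintype.card L : ℝ) = Fintype.card R + m := by
        rw [← Fintype.card_congr e]
        simp
      simp only [Sum.elim_inr, ← sum_div, sum_sub_distrib]
      rw [sum_comm]
      simp [hcol, hcard, hm']

/-- The matching of the permutation `σ` of `L ≃ R ⊕ Fin m` that forgets the dummy vertices. -/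
def permMatching [Fintype L] [DecidableEq L] (e : R ⊕ Fin m ≃ L) (σ : Equiv.Perm L) :
    Finset (L × R) :=
  {p | σ p.1 = e (.inl p.2)}

variable [Fintype L] [DecidableEq L] [DecidableEq R]

lemma isMatching_permMatching {E : Finset (L × R)} (e : R ⊕ Fin m ≃ L) {σ : Equiv.Perm L}
    (hE : ∀ u w, σ u = e (.inl w) → (u, w) ∈ E) : IsMatching E (permMatching e σ) := by
  simp only [IsMatching, permMatching, subset_iff, mem_filter, mem_univ, true_and]
  refine ⟨fun ⟨u, w⟩ huw => hE u w huw, fun ⟨u, w⟩ huw ⟨u', w'⟩ huw' hne => ?_⟩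
  refine ⟨fun h => hne ?_, fun h => hne ?_⟩
  · simp only at h
    subst h
    simpa using huw.symm.trans huw'
  · simp only at h
    subst h
    simpa using σ.injective (huw.trans huw'.symm)

lemma ite_mem_image_fst_permMatching_eq_sum (e : R ⊕ Fin m ≃ L) (σ : Equiv.Perm L) (u : L)
    (a : ℝ) : (if u ∈ (permMatching e σ).image Prod.fst then a else 0) =
      ∑ w, if σ u = e (.inl w) then a else 0 := by
  obtain ⟨j, hj⟩ : ∃ j, σ u = e j := ⟨e.symm (σ u), (e.apply_symm_apply _).symm⟩
  cases j with
  | inl w => simp [permMatching, hj, eq_comm]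
  | inr t => simp [permMatching, hj]

lemma exists_isDistribM_covP_eq_sum {E : Finset (L × R)}
    (hLR : Fintype.card R < Fintype.card L) {x : L → R → ℝ}
    (h0 : ∀ u w, 0 ≤ x u w) (hE : ∀ u w, x u w ≠ 0 → (u, w) ∈ E)
    (hrow : ∀ u, ∑ w, x u w ≤ 1) (hcol : ∀ w, ∑ u, x u w = 1) :
    ∃ D, IsDistribM E D ∧ ∀ u, covP D u = ∑ w, x u w := by
  obtain ⟨e⟩ : Nonempty (R ⊕ Fin (Fintype.card L - Fintype.card R) ≃ L) :=
    Fintype.card_eq.1 (by simp only [Fintype.card_sum, Fintype.card_fin]; omega)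
  obtain ⟨c, hc0, hc1, hcA⟩ := exists_eq_sum_perm_of_mem_doublyStochastic
    (padMatrix_mem_doublyStochastic (by omega) e h0 hrow hcol)
  have hm (σ : Equiv.Perm L) (hσ : c σ ≠ 0) : IsMatching E (permMatching e σ) := by
    refine isMatching_permMatching e fun u w huw => hE u w fun hx => hσ ?_
    have hle := Matrix.le_apply_of_eq_sum_permMatrix hc0 hcA σ u
    rw [huw, padMatrix_apply_inl, hx] at hle
    exact le_antisymm hle (hc0 σ)
  obtain ⟨D, hD, hcov⟩ := exists_isDistribM_of_weights c hc0 hc1 _ hm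
  refine ⟨D, hD, fun u => ?_⟩
  simp only [hcov, ite_mem_image_fst_permMatching_eq_sum, ← padMatrix_apply_inl x e u,
    Matrix.apply_eq_sum_of_eq_sum_permMatrix hcA]
  exact sum_comm

end Birkhoff

/-- Hall's theorem for the graph with `|N|` copies of each `u ∈ B` and `|B|` copies of each
`w ∈ N`, for which the hypothesis is Hall's condition. -/
lemma exists_injective_copies_of_expansion [DecidableEq L] [DecidableEq R]
    (E : Finset (L × R)) {B : Finset L} {N : Finset R}
    (hexp : ∀ X ⊆ B, #N * #X ≤ #B * #(nbhd E X ∩ N)) :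
    ∃ f : B × Fin #N → R × Fin #B, Function.Injective f ∧
      ∀ p, (f p).1 ∈ N ∧ (p.1.1, (f p).1) ∈ E := by
  let t : B × Fin #N → Finset (R × Fin #B) := fun p => {w ∈ N | (p.1.1, w) ∈ E} ×ˢ univ
  have hall (A : Finset (B × Fin #N)) : #A ≤ #(A.biUnion t) := by
    let X : Finset L := (A.image Prod.fst).map (Function.Embedding.subtype _)
    have hA : #A ≤ #X * #N := by
      simpa [X] using card_le_card (s := A) (t := A.image Prod.fst ×ˢ univ)
        fun p hp => mem_product.2 ⟨mem_image_of_mem _ hp, mem_univ _⟩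
    have hsub : (nbhd E X ∩ N) ×ˢ univ ⊆ A.biUnion t := by
      intro q hq
      obtain ⟨hqX, hqN⟩ := mem_inter.1 (mem_product.1 hq).1
      obtain ⟨u, hu, he⟩ := mem_nbhd.1 hqX
      obtain ⟨p, hpA, rfl⟩ : ∃ p ∈ A, p.1.1 = u := by simpa [X] using hu
      exact mem_biUnion.2 ⟨p, hpA, mem_product.2 ⟨mem_filter.2 ⟨hqN, he⟩, mem_univ _⟩⟩
    calc #A ≤ #N * #X := by rw [mul_comm]; exact hA
      _ ≤ #B * #(nbhd E X ∩ N) := hexp X fun u hu => by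
          obtain ⟨p, -, rfl⟩ : ∃ p ∈ A, p.1.1 = u := by simpa [X] using hu
          exact p.1.2
      _ = #((nbhd E X ∩ N) ×ˢ (univ : Finset (Fin #B))) := by simp [mul_comm]
      _ ≤ #(A.biUnion t) := card_le_card hsub
  obtain ⟨f, hf_inj, hft⟩ := (all_card_le_biUnion_card_iff_exists_injective t).1 hall
  exact ⟨f, hf_inj, fun p => mem_filter.1 (mem_product.1 (hft p)).1⟩

/-- The perfect matching of the copies, scaled by `1 / |B|`. -/
lemma exists_fractional_matching_of_expansion [Fintype L] [Fintype R] [DecidableEq L]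
    [DecidableEq R] (E : Finset (L × R)) {B : Finset L} {N : Finset R} (hB : B.Nonempty)
    (hexp : ∀ X ⊆ B, #N * #X ≤ #B * #(nbhd E X ∩ N)) :
    ∃ x : L → R → ℝ, (∀ u w, 0 ≤ x u w) ∧ (∀ u w, x u w ≠ 0 → (u, w) ∈ E ∧ u ∈ B ∧ w ∈ N) ∧
      (∀ u ∈ B, ∑ w, x u w = #N / #B) ∧ (∀ w ∈ N, ∑ u, x u w = 1) := by
  obtain ⟨f, hf_inj, hf⟩ := exists_injective_copies_of_expansion E hexp
  have himage : univ.image f = N ×ˢ (univ : Finset (Fin #B)) := by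
    refine eq_of_subset_of_card_le (fun q hq => ?_) ?_
    · obtain ⟨p, -, rfl⟩ := mem_image.1 hq
      exact mem_product.2 ⟨(hf p).1, mem_univ _⟩
    · rw [card_image_of_injective _ hf_inj]
      simp [mul_comm]
  have hrow (u : L) : ∑ w, #{p | p.1.1 = u ∧ (f p).1 = w} = #{p : B × Fin #N | p.1.1 = u} := by
    rw [card_eq_sum_card_fiberwise (f := fun p => (f p).1) (t := univ) (fun _ _ => mem_univ _)]
    simp [filter_filter]
  have hcol (w : R) : ∑ u, #{p | p.1.1 = u ∧ (f p).1 = w} = #{p | (f p).1 = w} := by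
    rw [card_eq_sum_card_fiberwise (s := ({p | (f p).1 = w} : Finset (B × Fin #N)))
      (f := fun p => p.1.1) (t := univ) (fun _ _ => mem_univ _)]
    simp [filter_filter, and_comm]
  refine ⟨fun u w => #{p | p.1.1 = u ∧ (f p).1 = w} / #B, fun u w => by positivity,
    fun u w huw => ?_, fun u hu => ?_, fun w hw => ?_⟩
  · obtain ⟨p, hp⟩ : ({p | p.1.1 = u ∧ (f p).1 = w} : Finset _).Nonempty := by
      rw [← card_ne_zero]
      rintro h
      simp [h] at huw
    obtain ⟨rfl, rfl⟩ := (mem_filter.1 hp).2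
    exact ⟨(hf p).2, p.1.2, (hf p).1⟩
  · rw [← sum_div, ← Nat.cast_sum, hrow]
    have hfiber : ({p : B × Fin #N | p.1.1 = u} : Finset _) = {⟨u, hu⟩} ×ˢ univ := by
      ext ⟨⟨v, hv⟩, s⟩
      simp [eq_comm]
    rw [hfiber, card_product, card_singleton, card_univ, Fintype.card_fin, one_mul]
  · rw [← sum_div, ← Nat.cast_sum, hcol]
    have hfiber : ({p | (f p).1 = w} : Finset _).image f = {w} ×ˢ univ := by
      ext q
      simp only [mem_image, mem_filter, mem_univ, true_and, mem_product, mem_singleton, and_true]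
      refine ⟨fun ⟨p, hp, hpq⟩ => hpq ▸ hp, fun hq => ?_⟩
      obtain ⟨p, -, rfl⟩ := mem_image.1 (himage ▸ mem_product.2 ⟨hq ▸ hw, mem_univ q.2⟩)
      exact ⟨p, hq, rfl⟩
    rw [← card_image_of_injective _ hf_inj, hfiber, card_product, card_singleton, card_univ,
      Fintype.card_fin, one_mul, div_self (by simpa using hB.ne_empty)]

section MinRatio

noncomputable def marginalRatio [DecidableEq L] [DecidableEq R] (E : Finset (L × R))
    (S X : Finset L) : ℝ :=
  (((nbhd E (X ∪ S)).card : ℝ) - ((nbhd E S).card : ℝ)) / (X.card : ℝ)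

variable [DecidableEq L] [DecidableEq R] {E : Finset (L × R)} {S X : Finset L}

lemma marginalRatio_eq : marginalRatio E S X = #(nbhd E X \ nbhd E S) / #X := by
  rw [marginalRatio, card_nbhd_union_sub]

namespace MinRatioSet

variable [Fintype L] [Fintype R]

lemma marginalRatio_le (h : MinRatioSet E S X) {Y : Finset L} (hY : Y.Nonempty)
    (hYS : Y ⊆ univ \ S) : marginalRatio E S X ≤ marginalRatio E S Y :=
  h.2.2 Y hY hYS

lemma disjoint (h : MinRatioSet E S X) : Disjoint X S :=
  (subset_sdiff.1 h.2.1).2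

lemma card_mul_le (h : MinRatioSet E S X) {Y : Finset L} (hYX : Y ⊆ X) :
    #(nbhd E X \ nbhd E S) * #Y ≤ #X * #(nbhd E Y ∩ (nbhd E X \ nbhd E S)) := by
  rcases Y.eq_empty_or_nonempty with rfl | hY
  · simp
  have hratio := h.marginalRatio_le hY (hYX.trans h.2.1)
  rw [marginalRatio_eq, marginalRatio_eq,
    div_le_div_iff₀ (by exact_mod_cast h.1.card_pos) (by exact_mod_cast hY.card_pos)] at hratio
  have hinter : nbhd E Y ∩ (nbhd E X \ nbhd E S) = nbhd E Y \ nbhd E S := by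
    rw [← inter_sdiff_assoc, inter_eq_left.2 (nbhd_mono hYX)]
  rw [hinter, mul_comm #X]
  exact_mod_cast hratio

lemma marginalRatio_le_one (h : MinRatioSet E S X) {M : Finset (L × R)} (hM : IsMatching E M)
    (hR : ∀ w : R, ∃ u : L, (u, w) ∈ M) : marginalRatio E S X ≤ 1 := by
  have hne : (univ \ S).Nonempty := h.1.mono h.2.1
  refine (h.marginalRatio_le hne subset_rfl).trans ?_
  rw [marginalRatio_eq, div_le_one (by exact_mod_cast hne.card_pos)]
  exact_mod_cast (card_le_card (sdiff_subset_sdiff (subset_univ _) subset_rfl)).trans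
    (hM.card_compl_nbhd_le hR S)

/-- Testing the minimality of `X` against `X ∪ X'` gives
`a / b ≤ (a + a') / (b + b')`, the mediant of the two ratios, hence `a / b ≤ a' / b'`. -/
lemma marginalRatio_le_of_union (h : MinRatioSet E S X) {X' : Finset L}
    (h' : MinRatioSet E (S ∪ X) X') : marginalRatio E S X ≤ marginalRatio E (S ∪ X) X' := by
  have hmed := h.marginalRatio_le (Y := X ∪ X') (h.1.mono subset_union_left)
    (union_subset h.2.1 (h'.2.1.trans (sdiff_subset_sdiff subset_rfl subset_union_left)))
  have hcard : (#(X ∪ X') : ℝ) = #X + #X' := by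
    rw [card_union_of_disjoint (disjoint_union_right.1 h'.disjoint).2.symm]
    push_cast
    rfl
  have hunion : X' ∪ (S ∪ X) = (X ∪ X') ∪ S := by
    rw [union_comm X X', union_assoc, union_comm S X]
  simp only [marginalRatio, hcard, ← hunion, union_comm X S] at hmed ⊢
  have hb : (0 : ℝ) < #X := by exact_mod_cast h.1.card_pos
  have hb' : (0 : ℝ) < #X' := by exact_mod_cast h'.1.card_pos
  rw [div_le_div_iff₀ hb (by positivity)] at hmed
  rw [div_le_div_iff₀ hb hb']
  nlinarith

end MinRatioSet

end MinRatio

lemma MaxminFairM.covP_eq_of_chain [Fintype L] [Fintype R] [DecidableEq L] [DecidableEq R]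
    {E : Finset (L × R)} {F D : Finset (L × R) → ℝ} (hF : MaxminFairM E F)
    (hD : IsDistribM E D) {k : ℕ} {S : ℕ → Finset L} (hS0 : S 0 = ∅)
    (hsat : ∀ i ≤ k, (#(nbhd E (S i)) : ℝ) ≤ ∑ u ∈ S i, covP D u)
    (hord : ∀ i < k, ∀ v ∈ S (i + 1), v ∉ S i → ∀ v' ∉ S i, covP D v ≤ covP D v') :
    ∀ i ≤ k, ∀ u ∈ S i, covP F u = covP D u := by
  intro i
  induction i with
  | zero => simp [hS0]
  | succ i ih =>
    intro hi
    replace ih := ih (by omega)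
    have hge : ∀ v ∈ S (i + 1), covP D v ≤ covP F v := by
      intro v hv
      by_cases hvS : v ∈ S i
      · exact (ih v hvS).ge
      by_contra! hlt
      obtain ⟨v', hv'D, hv'F⟩ := hF.2 D hD v hlt
      by_cases hv'S : v' ∈ S i
      · exact (ih v' hv'S ▸ hv'D).false
      · linarith [hord i hi v hv hvS v' hv'S]
    have hsum := le_antisymm (sum_le_sum hge) ((hF.1.sum_covP_le _).trans (hsat _ hi))
    exact fun u hu => ((sum_eq_sum_iff_of_le hge).1 hsum u hu).symm

lemma sum_eq_of_mem_pairwiseDisjoint {ι α M : Type*} [AddCommMonoid M] {s : Finset ι}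
    {T : ι → Finset α} (hT : (s : Set ι).PairwiseDisjoint T) {f : ι → M} {a : α}
    (hf : ∀ j ∈ s, f j ≠ 0 → a ∈ T j) {i : ι} (hi : i ∈ s) (ha : a ∈ T i) :
    ∑ j ∈ s, f j = f i :=
  sum_eq_single_of_mem i hi fun j hj hji => by_contra fun h =>
    disjoint_left.1 (hT hj hi hji) (hf j hj h) ha

section Chain

variable {α : Type*} [DecidableEq α] {T U : ℕ → Finset α} {k i j : ℕ}

lemma mono_of_succ_eq_union (hsucc : ∀ i < k, T (i + 1) = T i ∪ U i) (hij : i ≤ j)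
    (hj : j ≤ k) : T i ⊆ T j := by
  induction j, hij using Nat.le_induction with
  | base => exact subset_rfl
  | succ j _ ih => exact (ih (by omega)).trans (hsucc j hj ▸ subset_union_left)

lemma exists_mem_of_succ_eq_union (hsucc : ∀ i < k, T (i + 1) = T i ∪ U i) (h0 : T 0 = ∅)
    {a : α} (ha : a ∈ T k) : ∃ i < k, a ∈ U i := by
  induction k with
  | zero => simp [h0] at ha
  | succ k ih =>
    rcases mem_union.1 (hsucc k k.lt_succ_self ▸ ha) with ha | ha
    · obtain ⟨i, hi, ha⟩ := ih (fun i hi => hsucc i (by omega)) ha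
      exact ⟨i, by omega, ha⟩
    · exact ⟨k, k.lt_succ_self, ha⟩

lemma pairwiseDisjoint_of_succ_eq_union (hsucc : ∀ i < k, T (i + 1) = T i ∪ U i)
    (hdisj : ∀ i < k, Disjoint (T i) (U i)) :
    ((range k : Finset ℕ) : Set ℕ).PairwiseDisjoint U := by
  refine fun i hi j hj hij => ?_
  simp only [coe_range, Set.mem_Iio] at hi hj
  wlog hlt : i < j generalizing i j
  · exact (this j i hij.symm hj hi (by omega)).symm
  have hUT : U i ⊆ T j := (hsucc i hi ▸ subset_union_right).trans
    (mono_of_succ_eq_union hsucc hlt hj.le)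
  exact disjoint_of_subset_left hUT (hdisj j hj)

end Chain

/-- Indexed so that the block `B (i + 1)` is added to `S i`, avoiding truncated subtraction. -/
structure IsMinRatioDecomposition [Fintype L] [Fintype R] [DecidableEq L] [DecidableEq R]
    (E : Finset (L × R)) (k : ℕ) (B S : ℕ → Finset L) : Prop where
  S_zero : S 0 = ∅
  S_last : S k = univ
  S_succ : ∀ i < k, S (i + 1) = S i ∪ B (i + 1)
  minRatioSet : ∀ i < k, MinRatioSet E (S i) (B (i + 1))

def newNbhd [DecidableEq L] [DecidableEq R] (E : Finset (L × R)) (B S : ℕ → Finset L)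
    (i : ℕ) : Finset R :=
  nbhd E (B (i + 1)) \ nbhd E (S i)

lemma disjoint_nbhd_newNbhd [DecidableEq L] [DecidableEq R] (E : Finset (L × R))
    (B S : ℕ → Finset L) (i : ℕ) : Disjoint (nbhd E (S i)) (newNbhd E B S i) :=
  disjoint_sdiff

namespace IsMinRatioDecomposition

variable [Fintype L] [Fintype R] [DecidableEq L] [DecidableEq R] {E : Finset (L × R)} {k : ℕ}
  {B S : ℕ → Finset L} (d : IsMinRatioDecomposition E k B S) {i j : ℕ}
include d

lemma B_subset_S (hi : i < k) : B (i + 1) ⊆ S (i + 1) :=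
  d.S_succ i hi ▸ subset_union_right

lemma le_of_mem_B_of_notMem_S {u : L} (hj : j < k) (hu : u ∈ B (j + 1)) (hi : i ≤ k)
    (hu' : u ∉ S i) : i ≤ j := by
  by_contra! hji
  exact hu' (mono_of_succ_eq_union d.S_succ hji hi (d.B_subset_S hj hu))

lemma nbhd_S_succ (hi : i < k) : nbhd E (S (i + 1)) = nbhd E (S i) ∪ newNbhd E B S i := by
  rw [d.S_succ i hi, nbhd_union, newNbhd, union_sdiff_self_eq_union]

lemma newNbhd_subset (hi : i < k) : newNbhd E B S i ⊆ nbhd E (S (i + 1)) :=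
  d.nbhd_S_succ hi ▸ subset_union_right

lemma pairwiseDisjoint_B : ((range k : Finset ℕ) : Set ℕ).PairwiseDisjoint (B ∘ (· + 1)) :=
  pairwiseDisjoint_of_succ_eq_union d.S_succ fun i hi => (d.minRatioSet i hi).disjoint.symm

lemma pairwiseDisjoint_newNbhd :
    ((range k : Finset ℕ) : Set ℕ).PairwiseDisjoint (newNbhd E B S) :=
  pairwiseDisjoint_of_succ_eq_union (T := nbhd E ∘ S) (fun _ hi => d.nbhd_S_succ hi)
    fun i _ => disjoint_nbhd_newNbhd E B S i

lemma exists_mem_B (u : L) : ∃ i < k, u ∈ B (i + 1) :=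
  exists_mem_of_succ_eq_union (U := B ∘ (· + 1)) d.S_succ d.S_zero (d.S_last ▸ mem_univ u)

lemma exists_mem_newNbhd (hR : ∀ w : R, ∃ u : L, (u, w) ∈ E) (w : R) :
    ∃ i < k, w ∈ newNbhd E B S i :=
  exists_mem_of_succ_eq_union (T := nbhd E ∘ S) (fun _ hi => d.nbhd_S_succ hi)
    (by simp [d.S_zero, nbhd_empty]) (by simp [d.S_last, nbhd_univ hR])

lemma mem_B_of_mem_newNbhd {u : L} {w : R} (hi : i < k) (he : (u, w) ∈ E)
    (hu : u ∈ S (i + 1)) (hw : w ∈ newNbhd E B S i) : u ∈ B (i + 1) := by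
  rcases mem_union.1 (d.S_succ i hi ▸ hu) with hu | hu
  · exact absurd (mem_nbhd.2 ⟨u, hu, he⟩) (mem_sdiff.1 hw).2
  · exact hu

lemma marginalRatio_mono (hij : i ≤ j) (hj : j < k) :
    marginalRatio E (S i) (B (i + 1)) ≤ marginalRatio E (S j) (B (j + 1)) := by
  induction j, hij using Nat.le_induction with
  | base => exact le_rfl
  | succ j _ ih =>
    refine (ih (by omega)).trans ?_
    have := d.minRatioSet (j + 1) hj
    rw [d.S_succ j (by omega)] at this ⊢
    exact (d.minRatioSet j (by omega)).marginalRatio_le_of_union this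

lemma card_mul_marginalRatio (hi : i < k) :
    #(B (i + 1)) * marginalRatio E (S i) (B (i + 1)) = #(newNbhd E B S i) := by
  rw [marginalRatio_eq, mul_div_cancel₀ _ (by exact_mod_cast (d.minRatioSet i hi).1.card_pos.ne'),
    newNbhd]

lemma sum_S_eq_card_nbhd {c : L → ℝ}
    (hc : ∀ i < k, ∀ u ∈ B (i + 1), c u = marginalRatio E (S i) (B (i + 1))) :
    ∀ i ≤ k, ∑ u ∈ S i, c u = #(nbhd E (S i)) := by
  intro i
  induction i with
  | zero => simp [d.S_zero, nbhd_empty]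
  | succ i ih =>
    intro hi
    rw [d.S_succ i hi, sum_union (d.minRatioSet i hi).disjoint.symm, ih (by omega),
      sum_congr rfl (hc i hi), sum_const, nsmul_eq_mul, d.card_mul_marginalRatio hi,
      ← d.S_succ i hi, d.nbhd_S_succ hi, card_union_of_disjoint (disjoint_nbhd_newNbhd E B S i)]
    push_cast
    rfl

lemma exists_isDistribM_covP_eq_marginalRatio (hR : ∀ w : R, ∃ u : L, (u, w) ∈ E)
    {M : Finset (L × R)} (hM : IsMatching E M) (hMR : ∀ w : R, ∃ u : L, (u, w) ∈ M)
    (hLR : Fintype.card R < Fintype.card L) :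
    ∃ D, IsDistribM E D ∧
      ∀ i < k, ∀ u ∈ B (i + 1), covP D u = marginalRatio E (S i) (B (i + 1)) := by
  have hblock (i : ℕ) (hi : i < k) := exists_fractional_matching_of_expansion E
    (d.minRatioSet i hi).1 fun X hX => (d.minRatioSet i hi).card_mul_le hX
  choose! x hx0 hxE hxrow hxcol using hblock
  have hrow {i : ℕ} (hi : i < k) {u : L} (hu : u ∈ B (i + 1)) (w : R) :
      ∑ j ∈ range k, x j u w = x i u w :=
    sum_eq_of_mem_pairwiseDisjoint d.pairwiseDisjoint_B
      (fun j hj h => (hxE j (mem_range.1 hj) u w h).2.1) (mem_range.2 hi) hu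
  have hcol {i : ℕ} (hi : i < k) {w : R} (hw : w ∈ newNbhd E B S i) (u : L) :
      ∑ j ∈ range k, x j u w = x i u w :=
    sum_eq_of_mem_pairwiseDisjoint d.pairwiseDisjoint_newNbhd
      (fun j hj h => (hxE j (mem_range.1 hj) u w h).2.2) (mem_range.2 hi) hw
  obtain ⟨D, hD, hDx⟩ := exists_isDistribM_covP_eq_sum (x := fun u w => ∑ j ∈ range k, x j u w)
    hLR (fun u w => sum_nonneg fun j hj => hx0 j (mem_range.1 hj) u w)
    (fun u w h => by
      obtain ⟨j, hj, h⟩ := exists_ne_zero_of_sum_ne_zero h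
      exact (hxE j (mem_range.1 hj) u w h).1)
    (fun u => by
      obtain ⟨i, hi, hu⟩ := d.exists_mem_B u
      simp only [hrow hi hu]
      rw [hxrow i hi u hu, ← marginalRatio_eq]
      exact (d.minRatioSet i hi).marginalRatio_le_one hM hMR)
    (fun w => by
      obtain ⟨i, hi, hw⟩ := d.exists_mem_newNbhd hR w
      simp only [hcol hi hw]
      exact hxcol i hi w hw)
  refine ⟨D, hD, fun i hi u hu => ?_⟩
  rw [hDx, sum_congr rfl fun w _ => hrow hi hu w, hxrow i hi u hu, marginalRatio_eq]

lemma covP_eq_of_maxminFairM {F D : Finset (L × R) → ℝ} (hF : MaxminFairM E F)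
    (hD : IsDistribM E D)
    (hDB : ∀ i < k, ∀ u ∈ B (i + 1), covP D u = marginalRatio E (S i) (B (i + 1))) :
    ∀ i ≤ k, ∀ u ∈ S i, covP F u = covP D u := by
  refine hF.covP_eq_of_chain hD d.S_zero (fun i hi => (d.sum_S_eq_card_nbhd hDB i hi).ge) ?_
  intro i hi v hv hvS v' hv'S
  obtain ⟨j, hj, hv'⟩ := d.exists_mem_B v'
  have hvB : v ∈ B (i + 1) := (mem_union.1 (d.S_succ i hi ▸ hv)).resolve_left hvS
  rw [hDB i hi v hvB, hDB j hj v' hv']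
  exact d.marginalRatio_mono (d.le_of_mem_B_of_notMem_S hj hv' hi.le hv'S) hj

end IsMinRatioDecomposition

theorem fair_decomposition_bipartite_general [Fintype L] [Fintype R]
    [DecidableEq L] [DecidableEq R]
    (E : Finset (L × R))
    (hdegR : ∀ v : R, ∃ u : L, (u, v) ∈ E)
    (hρ : matchNum E = Fintype.card R)
    (hLR : Fintype.card R < Fintype.card L)
    (k : ℕ) (B S : ℕ → Finset L)
    (hS0 : S 0 = ∅) (hSk : S k = Finset.univ)
    (hSi : ∀ i, 1 ≤ i → i ≤ k → S i = S (i - 1) ∪ B i)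
    (hBmin : ∀ i, 1 ≤ i → i ≤ k → MinRatioSet E (S (i - 1)) (B i))
    (F : Finset (L × R) → ℝ) (hF : MaxminFairM E F) :
    ∀ i, 1 ≤ i → i ≤ k →
      (∀ u ∈ B i,
        covP F u = (((nbhd E (B i)) \ (nbhd E (S (i - 1)))).card : ℝ) / ((B i).card : ℝ)) ∧
      (∀ w ∈ (nbhd E (B i)) \ (nbhd E (S (i - 1))),
        (∑ M : Finset (L × R),
          if ∃ e ∈ M, e.2 = w ∧ e.1 ∈ B i then F M else 0) = 1) := by
  have d : IsMinRatioDecomposition E k B S := ⟨hS0, hSk,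
    fun i hi => hSi (i + 1) (by omega) hi, fun i hi => hBmin (i + 1) (by omega) hi⟩
  obtain ⟨M₀, hM₀, hM₀R⟩ := exists_isMatching_forall_mem hρ
  obtain ⟨D, hD, hDB⟩ := d.exists_isDistribM_covP_eq_marginalRatio hdegR hM₀ hM₀R hLR
  have hFD := d.covP_eq_of_maxminFairM hF hD hDB
  intro i hi hik
  obtain ⟨i, rfl⟩ : ∃ j, i = j + 1 := ⟨i - 1, by omega⟩
  rw [Nat.add_sub_cancel]
  refine ⟨fun u hu => ?_, fun w hw => hF.1.sum_ite_eq_one fun M hM => ?_⟩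
  · rw [hFD _ hik u (d.B_subset_S hik hu), hDB i hik u hu, marginalRatio_eq]
  · have hsat : ∑ u ∈ S (i + 1), covP F u = #(nbhd E (S (i + 1))) := by
      rw [sum_congr rfl (hFD _ hik), d.sum_S_eq_card_nbhd hDB _ hik]
    obtain ⟨e, he, rfl, heS⟩ :=
      hF.1.exists_mem_of_sum_covP_eq hsat hM (d.newNbhd_subset hik hw)
    exact ⟨e, he, rfl, d.mem_B_of_mem_newNbhd hik ((hF.1.2.1 M hM).1 he) heS hw⟩

/-- Fair decomposition theorem for one-sided bipartite matching.  Let `G` be a bipartite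
graph with every vertex of positive degree and maximum matching size
`ρ(L) = |R| < |L|`.  Define `S 0 = ∅` and, iteratively, let `B i` be a maximal set
`X ⊆ L \ S (i-1)` minimizing `(|Γ(X ∪ S (i-1))| − |Γ(S (i-1))|) / |X|`, with
`S i = S (i-1) ∪ B i`, stopping at the first `k` with `S k = L`.  Then for every
maxmin-fair distribution `F` of matchings, every `u ∈ B i` is covered with probability
`λ i = |Γ(B i) \ Γ(S (i-1))| / |B i|`, and every `w ∈ Γ(B i) \ Γ(S (i-1))` is matched to
some vertex of `B i` with probability `1`. -/
theorem fair_decomposition_bipartite [Fintype L] [Fintype R]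
    [DecidableEq L] [DecidableEq R] [Nonempty L] [Nonempty R]
    (E : Finset (L × R))
    (hdegL : ∀ u : L, ∃ v : R, (u, v) ∈ E)
    (hdegR : ∀ v : R, ∃ u : L, (u, v) ∈ E)
    (hρ : matchNum E = Fintype.card R)
    (hLR : Fintype.card R < Fintype.card L)
    (k : ℕ) (hk : 1 ≤ k) (B S : ℕ → Finset L)
    (hS0 : S 0 = ∅) (hSk : S k = Finset.univ)
    (hSfirst : ∀ i, 1 ≤ i → i < k → S i ≠ Finset.univ)
    (hSi : ∀ i, 1 ≤ i → i ≤ k → S i = S (i - 1) ∪ B i)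
    (hBmin : ∀ i, 1 ≤ i → i ≤ k → MinRatioSet E (S (i - 1)) (B i))
    (hBmax : ∀ i, 1 ≤ i → i ≤ k →
      ∀ X : Finset L, MinRatioSet E (S (i - 1)) X → B i ⊆ X → X = B i)
    (F : Finset (L × R) → ℝ) (hF : MaxminFairM E F) :
    ∀ i, 1 ≤ i → i ≤ k →
      (∀ u ∈ B i,
        covP F u = (((nbhd E (B i)) \ (nbhd E (S (i - 1)))).card : ℝ) / ((B i).card : ℝ)) ∧
      (∀ w ∈ (nbhd E (B i)) \ (nbhd E (S (i - 1))),
        (∑ M : Finset (L × R),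
          if ∃ e ∈ M, e.2 = w ∧ e.1 ∈ B i then F M else 0) = 1) :=
  fair_decomposition_bipartite_general E hdegR hρ hLR k B S hS0 hSk hSi hBmin F hF
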